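/- arXiv:1312.1851 — 5 statements merged into one kernel-verified Lean document; each statement's English description precedes it below -/
import Mathlib

section
/- Let m > 0 be real and p ≥ 1 an integer, and let f(x) = -m²x² + x^{2p+2}/(p+1). For every δ with 0 < δ < m^{1/p}, there exists a unique real δ' in the open interval (m^{1/p}, (p+1)^{1/(2p)} m^{1/p}) such that f(δ') = f(δ). -/
/-- The potential `f(x) = -m²x² + x^{2p+2}/(p+1)`. -/
noncomputable def potential (m : ℝ) (p : ℕ) (x : ℝ) : ℝ :=
  -(m ^ 2) * x ^ 2 + x ^ (2 * p + 2) / ((p : ℝ) + 1)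

/-!
`f'(x) = 2x (x^{2p} - m²)`, so `f` decreases on `[0, m^{1/p}]` and increases on `[m^{1/p}, ∞)`.
Since `f 0 = 0 = f((p+1)^{1/(2p)} m^{1/p})`, a value `f δ` with `0 < δ < m^{1/p}` lies strictly
between the minimum `f(m^{1/p})` and `0`, and is taken exactly once on the increasing branch.
-/

theorem rpow_one_div_natCast_pow {x : ℝ} (hx : 0 ≤ x) {n : ℕ} (hn : n ≠ 0) :
    (x ^ ((1 : ℝ) / n)) ^ n = x := by
  rw [one_div, Real.rpow_inv_natCast_pow hx hn]

theorem existsUnique_mem_Ioo_eq_of_strictMonoOn {f : ℝ → ℝ} {a b y : ℝ} (hf : Continuous f)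
    (hmono : StrictMonoOn f (Set.Ici a)) (hab : a ≤ b) (hy : y ∈ Set.Ioo (f a) (f b)) :
    ∃! x, x ∈ Set.Ioo a b ∧ f x = y := by
  obtain ⟨x, hx, rfl⟩ := intermediate_value_Ioo hab hf.continuousOn hy
  exact ⟨x, ⟨hx, rfl⟩, fun z ⟨hz, hfz⟩ => hmono.injOn hz.1.le hx.1.le hfz⟩

namespace potential

variable {m : ℝ} {p : ℕ}

theorem hasDerivAt (x : ℝ) : HasDerivAt (potential m p) (2 * x * (x ^ (2 * p) - m ^ 2)) x := by
  refine (((hasDerivAt_pow 2 x).const_mul (-(m ^ 2))).add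
    ((hasDerivAt_pow (2 * p + 2) x).div_const ((p : ℝ) + 1))).congr_deriv ?_
  rw [show 2 * p + 2 - 1 = 2 * p + 1 by omega]
  push_cast
  field_simp
  ring

theorem continuous : Continuous (potential m p) := by
  unfold potential
  fun_prop

@[simp]
theorem zero : potential m p 0 = 0 := by
  simp [potential]

theorem eq_zero_of_pow_eq {b : ℝ} (hb : b ^ (2 * p) = ((p : ℝ) + 1) * m ^ 2) :
    potential m p b = 0 := by
  rw [potential, pow_add, hb]
  field_simp
  ring

theorem strictAntiOn_Icc {c : ℝ} (hp : p ≠ 0) (hcm : c ^ (2 * p) = m ^ 2) :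
    StrictAntiOn (potential m p) (Set.Icc 0 c) := by
  refine strictAntiOn_of_deriv_neg (convex_Icc 0 c) continuous.continuousOn fun x hx => ?_
  rw [interior_Icc] at hx
  have hxm : x ^ (2 * p) < m ^ 2 := hcm ▸ pow_lt_pow_left₀ hx.2 hx.1.le (by omega)
  rw [(hasDerivAt x).deriv]
  nlinarith [hx.1]

theorem strictMonoOn_Ici {c : ℝ} (hp : p ≠ 0) (hc : 0 ≤ c) (hcm : c ^ (2 * p) = m ^ 2) :
    StrictMonoOn (potential m p) (Set.Ici c) := by
  refine strictMonoOn_of_deriv_pos (convex_Ici c) continuous.continuousOn fun x hx => ?_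
  rw [interior_Ici] at hx
  have hxm : m ^ 2 < x ^ (2 * p) := hcm ▸ pow_lt_pow_left₀ hx hc (by omega)
  rw [(hasDerivAt x).deriv]
  nlinarith [hc.trans_lt hx]

end potential

/-- for every `0 < δ < m^{1/p}` there is a unique
`δ' ∈ (m^{1/p}, (p+1)^{1/(2p)} m^{1/p})` with `f(δ') = f(δ)`. -/
theorem potential_unique_conjugate (m : ℝ) (p : ℕ) (hm : 0 < m) (hp : 1 ≤ p) :
    ∀ δ : ℝ, 0 < δ → δ < m ^ ((1 : ℝ) / p) →
      ∃! δ' : ℝ,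
        δ' ∈ Set.Ioo (m ^ ((1 : ℝ) / p))
          (((p : ℝ) + 1) ^ ((1 : ℝ) / (2 * p)) * m ^ ((1 : ℝ) / p)) ∧
        potential m p δ' = potential m p δ := by
  intro δ hδ hδa
  set a := m ^ ((1 : ℝ) / p)
  set r := ((p : ℝ) + 1) ^ ((1 : ℝ) / (2 * p))
  have hp0 : p ≠ 0 := by omega
  have ha0 : 0 ≤ a := by positivity
  have ha : a ^ (2 * p) = m ^ 2 := by
    rw [pow_mul', rpow_one_div_natCast_pow hm.le hp0]
  have hr : r ^ (2 * p) = (p : ℝ) + 1 := by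
    have h2p : (2 * p : ℝ) = (2 * p : ℕ) := by push_cast; rfl
    rw [show r = ((p : ℝ) + 1) ^ ((1 : ℝ) / (2 * p : ℕ)) by rw [← h2p],
      rpow_one_div_natCast_pow (by positivity) (by omega)]
  have hr1 : 1 < r := Real.one_lt_rpow (by simpa using Nat.pos_of_ne_zero hp0) (by positivity)
  have hfδ : potential m p δ ∈ Set.Ioo (potential m p a) (potential m p (r * a)) := by
    have hanti := potential.strictAntiOn_Icc hp0 ha
    rw [potential.eq_zero_of_pow_eq (b := r * a) (by rw [mul_pow, hr, ha]),
      ← potential.zero (m := m) (p := p)]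
    exact ⟨hanti ⟨hδ.le, hδa.le⟩ ⟨ha0, le_rfl⟩ hδa, hanti ⟨le_rfl, ha0⟩ ⟨hδ.le, hδa.le⟩ hδ⟩
  exact existsUnique_mem_Ioo_eq_of_strictMonoOn potential.continuous
    (potential.strictMonoOn_Ici hp0 ha0 ha) (le_mul_of_one_le_left ha0 hr1.le) hfδ
end

section
/- Let m > 0 be real and p ≥ 1 an integer, and let f(x) = -m²x² + x^{2p+2}/(p+1). For all reals η, α, δ with 0 < η ≤ α ≤ δ < m^{1/p}, one has (m² - δ^{2p})(α² - η²) ≤ f(η) - f(α) ≤ m²(α² - η²). -/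
lemma pow_sub_pow_le_mul_pow_sub {R : Type*} [CommRing R] [LinearOrder R] [IsStrictOrderedRing R]
    {u v : R} (hu : 0 ≤ u) (huv : 0 ≤ u + v) (n : ℕ) :
    u ^ n - v ^ n ≤ n * u ^ (n - 1) * (u - v) := by
  have hbernoulli := pow_add_mul_le_add_pow hu (b := v - u) (by linarith) n
  rw [add_sub_cancel] at hbernoulli
  linarith [show (n : R) * u ^ (n - 1) * (v - u) = -(n * u ^ (n - 1) * (u - v)) by ring]

lemma pow_two_mul_add_two_eq (x : ℝ) (p : ℕ) : x ^ (2 * p + 2) = (x ^ 2) ^ (p + 1) := by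
  ring

lemma pow_two_mul_add_two_sub_le {η α δ : ℝ} (hηα : η ^ 2 ≤ α ^ 2) (hαδ : α ^ 2 ≤ δ ^ 2)
    (p : ℕ) : α ^ (2 * p + 2) - η ^ (2 * p + 2) ≤ (p + 1) * δ ^ (2 * p) * (α ^ 2 - η ^ 2) := by
  have hbernoulli := pow_sub_pow_le_mul_pow_sub (sq_nonneg α)
    (add_nonneg (sq_nonneg α) (sq_nonneg η)) (p + 1)
  rw [pow_two_mul_add_two_eq, pow_two_mul_add_two_eq, pow_mul]
  push_cast at hbernoulli
  calc _ ≤ _ := hbernoulli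
    _ ≤ _ := by gcongr

lemma potential_sub_potential (m : ℝ) (p : ℕ) (η α : ℝ) :
    potential m p η - potential m p α =
      m ^ 2 * (α ^ 2 - η ^ 2) - (α ^ (2 * p + 2) - η ^ (2 * p + 2)) / ((p : ℝ) + 1) := by
  unfold potential
  ring

theorem potential_difference_bounds_general (m : ℝ) (p : ℕ) :
    ∀ η α δ : ℝ, 0 < η → η ≤ α → α ≤ δ → δ < m ^ ((1 : ℝ) / p) →
      (m ^ 2 - δ ^ (2 * p)) * (α ^ 2 - η ^ 2)
          ≤ potential m p η - potential m p α ∧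
      potential m p η - potential m p α ≤ m ^ 2 * (α ^ 2 - η ^ 2) := by
  intro η α δ hη hηα hαδ _
  have hsq_ηα : η ^ 2 ≤ α ^ 2 := pow_le_pow_left₀ hη.le hηα 2
  have hsq_αδ : α ^ 2 ≤ δ ^ 2 := pow_le_pow_left₀ (hη.le.trans hηα) hαδ 2
  have hp : (0 : ℝ) < p + 1 := by positivity
  have hgap_nonneg : 0 ≤ α ^ (2 * p + 2) - η ^ (2 * p + 2) := by
    rw [pow_two_mul_add_two_eq, pow_two_mul_add_two_eq, sub_nonneg]
    exact pow_le_pow_left₀ (sq_nonneg η) hsq_ηα _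
  have hgap_le : (α ^ (2 * p + 2) - η ^ (2 * p + 2)) / ((p : ℝ) + 1)
      ≤ δ ^ (2 * p) * (α ^ 2 - η ^ 2) := by
    rw [div_le_iff₀ hp]
    linarith [pow_two_mul_add_two_sub_le hsq_ηα hsq_αδ p]
  rw [potential_sub_potential]
  constructor
  · linarith
  · linarith [div_nonneg hgap_nonneg hp.le]

/-- for `0 < η ≤ α ≤ δ < m^{1/p}`,
`(m² - δ^{2p})(α² - η²) ≤ f(η) - f(α) ≤ m²(α² - η²)`. -/
theorem potential_difference_bounds (m : ℝ) (p : ℕ) (hm : 0 < m) (hp : 1 ≤ p) :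
    ∀ η α δ : ℝ, 0 < η → η ≤ α → α ≤ δ → δ < m ^ ((1 : ℝ) / p) →
      (m ^ 2 - δ ^ (2 * p)) * (α ^ 2 - η ^ 2)
          ≤ potential m p η - potential m p α ∧
      potential m p η - potential m p α ≤ m ^ 2 * (α ^ 2 - η ^ 2) :=
  potential_difference_bounds_general m p
end

section
/- Let m > 0 be real, p ≥ 1 an integer, and 0 < η < δ < m^{1/p}. Let (a,b) : ℝ → ℝ² be a solution of the planar system ȧ = b, ḃ = m²a - a^{2p+1} with a(0) = η and b(0) = 0. If t > 0 is such that b(s) > 0 for all s ∈ (0, t], then the function α ↦ 1/√(f(η) - f(α)) is integrable on (η, a(t)) and t = ∫_η^{a(t)} dα/√(f(η) - f(α)), where f(x) = -m²x² + x^{2p+2}/(p+1). -/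
/-!
Along the solution the energy `b² + f(a)` is conserved, so `b = √(f(η) - f(a))` while `b > 0`.
On `[0, t]` the map `s ↦ a s` is then a strictly increasing change of variables with
`ȧ = b`, and substituting `α = a s` turns `∫ dα / √(f(η) - f(α))` into `∫₀ᵗ ds = t`.
-/

open MeasureTheory intervalIntegral Set

lemma hasDerivAt_potential (m : ℝ) (p : ℕ) (x : ℝ) :
    HasDerivAt (potential m p) (-(2 * m ^ 2) * x + 2 * x ^ (2 * p + 1)) x := by
  have hquad : HasDerivAt (fun x : ℝ => -(m ^ 2) * x ^ 2) (-(m ^ 2) * (2 * x)) x := by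
    simpa using (hasDerivAt_pow 2 x).const_mul (-(m ^ 2))
  have hpow : HasDerivAt (fun x : ℝ => x ^ (2 * p + 2) / ((p : ℝ) + 1))
      (((2 * p + 2 : ℕ) : ℝ) * x ^ (2 * p + 1) / ((p : ℝ) + 1)) x := by
    simpa using (hasDerivAt_pow (2 * p + 2) x).div_const ((p : ℝ) + 1)
  refine (hquad.fun_add hpow).congr_deriv ?_
  push_cast
  field_simp

lemma sq_add_comp_eq_of_hasDerivAt {V V' a b : ℝ → ℝ} (hV : ∀ x, HasDerivAt V (V' x) x)
    (ha : ∀ s, HasDerivAt a (b s) s) (hb : ∀ s, HasDerivAt b (-V' (a s) / 2) s) (s₀ s : ℝ) :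
    b s ^ 2 + V (a s) = b s₀ ^ 2 + V (a s₀) := by
  have hE : ∀ s, HasDerivAt (fun s => b s ^ 2 + V (a s)) 0 s := fun s => by
    refine (((hb s).fun_pow 2).fun_add ((hV (a s)).comp s (ha s))).congr_deriv ?_
    ring
  exact is_const_of_deriv_eq_zero (fun s => (hE s).differentiableAt) (fun s => (hE s).deriv) s s₀

/-- `g` may be unbounded at the endpoints, hence the change of variables for injective maps
rather than `integral_comp_mul_deriv`. -/
lemma intervalIntegrable_and_integral_eq_sub_of_mul_deriv_eq_one {a b g : ℝ → ℝ} {t₀ t₁ : ℝ}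
    (ht : t₀ ≤ t₁) (ha : ∀ s ∈ Icc t₀ t₁, HasDerivAt a (b s) s)
    (hb : ∀ s ∈ Ioo t₀ t₁, 0 < b s) (hg : ∀ s ∈ Ioo t₀ t₁, b s * g (a s) = 1) :
    IntervalIntegrable g volume (a t₀) (a t₁) ∧ ∫ x in a t₀..a t₁, g x = t₁ - t₀ := by
  have hcont : ContinuousOn a (Icc t₀ t₁) := fun s hs => (ha s hs).continuousAt.continuousWithinAt
  have hmono : StrictMonoOn a (Icc t₀ t₁) := by
    refine strictMonoOn_of_deriv_pos (convex_Icc t₀ t₁) hcont fun s hs => ?_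
    rw [interior_Icc] at hs
    rw [(ha s (Ioo_subset_Icc_self hs)).deriv]
    exact hb s hs
  have hle : a t₀ ≤ a t₁ := hmono.monotoneOn (left_mem_Icc.2 ht) (right_mem_Icc.2 ht) ht
  have himage : a '' Ioo t₀ t₁ = Ioo (a t₀) (a t₁) := by
    refine Subset.antisymm ?_ (intermediate_value_Ioo ht hcont)
    rintro _ ⟨s, hs, rfl⟩
    exact ⟨hmono (left_mem_Icc.2 ht) (Ioo_subset_Icc_self hs) hs.1,
      hmono (Ioo_subset_Icc_self hs) (right_mem_Icc.2 ht) hs.2⟩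
  have hderiv : ∀ s ∈ Ioo t₀ t₁, HasDerivWithinAt a (b s) (Ioo t₀ t₁) s :=
    fun s hs => (ha s (Ioo_subset_Icc_self hs)).hasDerivWithinAt
  have hinj : InjOn a (Ioo t₀ t₁) := hmono.injOn.mono Ioo_subset_Icc_self
  have hone : ∀ s ∈ Ioo t₀ t₁, |b s| • g (a s) = 1 := fun s hs => by
    rw [abs_of_pos (hb s hs), smul_eq_mul, hg s hs]
  have hintegrand : IntegrableOn (fun s => |b s| • g (a s)) (Ioo t₀ t₁) :=
    (integrableOn_const measure_Ioo_lt_top.ne).congr_fun (fun s hs => (hone s hs).symm)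
      measurableSet_Ioo
  have hint := (integrableOn_image_iff_integrableOn_abs_deriv_smul measurableSet_Ioo hderiv
    hinj g).2 hintegrand
  have hval := integral_image_eq_integral_abs_deriv_smul measurableSet_Ioo hderiv hinj g
  rw [himage] at hint hval
  refine ⟨(intervalIntegrable_iff_integrableOn_Ioo_of_le hle).2 hint, ?_⟩
  rw [integral_of_le hle, integral_Ioc_eq_integral_Ioo, hval,
    setIntegral_congr_fun measurableSet_Ioo hone]
  simp [ht]

theorem time_as_integral_general (m : ℝ) (p : ℕ)
    (η : ℝ)
    (a b : ℝ → ℝ)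
    (ha : ∀ s : ℝ, HasDerivAt a (b s) s)
    (hb : ∀ s : ℝ, HasDerivAt b (m ^ 2 * a s - a s ^ (2 * p + 1)) s)
    (ha0 : a 0 = η) (hb0 : b 0 = 0)
    (t : ℝ) (ht : 0 < t) (hbpos : ∀ s ∈ Set.Ioc (0 : ℝ) t, 0 < b s) :
    IntervalIntegrable
      (fun α => 1 / Real.sqrt (potential m p η - potential m p α)) volume η (a t) ∧
    t = ∫ α in η..(a t), 1 / Real.sqrt (potential m p η - potential m p α) := by
  have henergy : ∀ s, b s ^ 2 = potential m p η - potential m p (a s) := fun s => by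
    have hb' : ∀ s, HasDerivAt b (-(-(2 * m ^ 2) * a s + 2 * a s ^ (2 * p + 1)) / 2) s :=
      fun s => (hb s).congr_deriv (by ring)
    have := sq_add_comp_eq_of_hasDerivAt (hasDerivAt_potential m p) ha hb' 0 s
    rw [ha0, hb0] at this
    linarith
  have hbpos_Ioo : ∀ s ∈ Ioo 0 t, 0 < b s := fun s hs => hbpos s (Ioo_subset_Ioc_self hs)
  have hsqrt : ∀ s ∈ Ioo 0 t,
      b s * (1 / Real.sqrt (potential m p η - potential m p (a s))) = 1 := fun s hs => by
    rw [← henergy s, Real.sqrt_sq (hbpos_Ioo s hs).le, mul_one_div_cancel (hbpos_Ioo s hs).ne']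
  obtain ⟨hint, hval⟩ := intervalIntegrable_and_integral_eq_sub_of_mul_deriv_eq_one
    (g := fun α => 1 / Real.sqrt (potential m p η - potential m p α)) ht.le (fun s _ => ha s)
    hbpos_Ioo hsqrt
  rw [ha0] at hint hval
  exact ⟨hint, by rw [hval, sub_zero]⟩

/-- time along the periodic orbit expressed as an integral. If `(a,b)`
solves `ȧ = b`, `ḃ = m²a - a^{2p+1}` with `a(0) = η`, `b(0) = 0` and `b > 0` on `(0,t]`,
then `α ↦ 1/√(f(η) - f(α))` is integrable on `(η, a(t))` and
`t = ∫_η^{a(t)} dα/√(f(η) - f(α))`. -/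
theorem time_as_integral (m : ℝ) (p : ℕ) (hm : 0 < m) (hp : 1 ≤ p)
    (η δ : ℝ) (hη : 0 < η) (hηδ : η < δ) (hδ : δ < m ^ ((1 : ℝ) / p))
    (a b : ℝ → ℝ)
    (ha : ∀ s : ℝ, HasDerivAt a (b s) s)
    (hb : ∀ s : ℝ, HasDerivAt b (m ^ 2 * a s - a s ^ (2 * p + 1)) s)
    (ha0 : a 0 = η) (hb0 : b 0 = 0)
    (t : ℝ) (ht : 0 < t) (hbpos : ∀ s ∈ Set.Ioc (0 : ℝ) t, 0 < b s) :
    IntervalIntegrable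
      (fun α => 1 / Real.sqrt (potential m p η - potential m p α)) volume η (a t) ∧
    t = ∫ α in η..(a t), 1 / Real.sqrt (potential m p η - potential m p α) :=
  time_as_integral_general m p η a b ha hb ha0 hb0 t ht hbpos
end

section
/- Let m > 0 be real, p ≥ 1 an integer, and 0 < δ < m^{1/p}. There exist constants η₀ > 0 and C > 0 (depending only on m, p, δ) such that for every η with 0 < η < η₀, the solution (a,b) of the planar system ȧ = b, ḃ = m²a - a^{2p+1} with a(0) = η, b(0) = 0 admits a time T¹ > 0 such that b(T¹) = 0, b(t) > 0 for all t ∈ (0, T¹), a(T¹) > m^{1/p}, f(a(T¹)) = f(η), and, denoting by τ_η the first time with a(τ_η) = δ, one has 0 < T¹ - τ_η ≤ C, where f(x) = -m²x² + x^{2p+2}/(p+1). -/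
open Set Filter Topology

theorem exists_Ioc_lt_of_deriv_pos {g g' : ℝ → ℝ} (hg : ∀ t, HasDerivAt g (g' t) t)
    (hg' : Continuous g') {x : ℝ} (hx : 0 < g' x) : ∃ s > x, ∀ t ∈ Ioc x s, g x < g t := by
  obtain ⟨s, hs, hsub⟩ := mem_nhdsGT_iff_exists_Ioo_subset.1 <|
    nhdsWithin_le_nhds ((hg'.tendsto x).eventually (lt_mem_nhds hx))
  have hmono : StrictMonoOn g (Icc x s) :=
    strictMonoOn_of_hasDerivWithinAt_pos (convex_Icc x s)
      (HasDerivAt.continuousOn fun t _ => hg t) (fun t _ => (hg t).hasDerivWithinAt)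
      (fun t ht => hsub (by rwa [interior_Icc] at ht))
  exact ⟨s, hs, fun t ht => hmono (left_mem_Icc.2 (le_of_lt hs)) (Ioc_subset_Icc_self ht) ht.1⟩

theorem exists_first_zero {g : ℝ → ℝ} (hg : Continuous g) {s₀ : ℝ} (hs₀ : 0 < s₀)
    (hpos : ∀ t ∈ Ioc 0 s₀, 0 < g t) (hneg : ∃ t > 0, g t ≤ 0) :
    ∃ T > 0, g T = 0 ∧ ∀ t ∈ Ioo 0 T, 0 < g t := by
  set S := Ici s₀ ∩ g ⁻¹' Iic 0
  have hS : S.Nonempty := by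
    obtain ⟨t, ht, hgt⟩ := hneg
    refine ⟨t, mem_Ici.2 ?_, hgt⟩
    by_contra! hts
    exact (hpos t ⟨ht, hts.le⟩).not_ge hgt
  have hbdd : BddBelow S := ⟨s₀, fun _ h => h.1⟩
  have hT : sInf S ∈ S := (isClosed_Ici.inter (isClosed_Iic.preimage hg)).csInf_mem hS hbdd
  have hT0 : 0 < sInf S := hs₀.trans_le hT.1
  have hbefore : ∀ t ∈ Ioo 0 (sInf S), 0 < g t := by
    rintro t ⟨ht0, htT⟩
    by_contra! hgt
    rcases le_or_gt t s₀ with hts | hts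
    · exact (hpos t ⟨ht0, hts⟩).not_ge hgt
    · exact htT.not_ge (csInf_le hbdd ⟨hts.le, hgt⟩)
  refine ⟨sInf S, hT0, le_antisymm hT.2 ?_, hbefore⟩
  refine ge_of_tendsto (hg.continuousWithinAt (s := Iio (sInf S))) ?_
  filter_upwards [Ioo_mem_nhdsLT hT0] with t ht using (hbefore t ht).le

theorem first_hit_lt {a : ℝ → ℝ} (ha : Continuous a) {δ τ T : ℝ} (hT0 : 0 ≤ T)
    (h0 : a 0 ≤ δ) (hT : δ < a T) (hfirst : ∀ s, 0 ≤ s → s < τ → a s ≠ δ) : τ < T := by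
  obtain ⟨s, hs, has⟩ := intermediate_value_Icc hT0 ha.continuousOn ⟨h0, hT.le⟩
  have hτs : τ ≤ s := not_lt.1 fun hsτ => hfirst s hs.1 hsτ has
  exact hτs.trans_lt (hs.2.lt_of_ne (by rintro rfl; exact hT.ne' has))

section Potential

variable {m : ℝ} {p : ℕ}

theorem potential_hasDerivAt (m : ℝ) (p : ℕ) (x : ℝ) :
    HasDerivAt (potential m p) (-2 * (m ^ 2 * x - x ^ (2 * p + 1))) x := by
  refine (((hasDerivAt_pow 2 x).const_mul (-(m ^ 2))).add
    ((hasDerivAt_pow (2 * p + 2) x).div_const ((p : ℝ) + 1))).congr_deriv ?_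
  have hp1 : (p : ℝ) + 1 ≠ 0 := by positivity
  push_cast
  field_simp
  ring

theorem continuous_potential : Continuous (potential m p) := by
  unfold potential
  fun_prop

@[simp]
theorem potential_zero : potential m p 0 = 0 := by
  simp [potential]

theorem rpow_one_div_pow_two_mul (hm : 0 ≤ m) (hp : p ≠ 0) :
    (m ^ ((1 : ℝ) / p)) ^ (2 * p) = m ^ 2 := by
  rw [pow_mul', one_div, Real.rpow_inv_natCast_pow hm hp]

theorem pow_two_mul_lt_sq_iff (hm : 0 < m) (hp : p ≠ 0) {x : ℝ} (hx : 0 ≤ x) :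
    x ^ (2 * p) < m ^ 2 ↔ x < m ^ ((1 : ℝ) / p) := by
  rw [← rpow_one_div_pow_two_mul hm.le hp]
  exact pow_lt_pow_iff_left₀ hx (by positivity) (by omega)

theorem sq_lt_pow_two_mul_iff (hm : 0 < m) (hp : p ≠ 0) {x : ℝ} (hx : 0 ≤ x) :
    m ^ 2 < x ^ (2 * p) ↔ m ^ ((1 : ℝ) / p) < x := by
  rw [← rpow_one_div_pow_two_mul hm.le hp]
  exact pow_lt_pow_iff_left₀ (by positivity) hx (by omega)

theorem sq_mul_lt_pow_of_rpow_lt (hm : 0 < m) (hp : p ≠ 0) {x : ℝ}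
    (hx : m ^ ((1 : ℝ) / p) < x) : m ^ 2 * x < x ^ (2 * p + 1) := by
  have hx0 : 0 < x := (by positivity : 0 < m ^ ((1 : ℝ) / p)).trans hx
  have := (sq_lt_pow_two_mul_iff hm hp hx0.le).2 hx
  rw [pow_succ]
  exact mul_lt_mul_of_pos_right this hx0

theorem strictAntiOn_potential (hm : 0 < m) (hp : p ≠ 0) :
    StrictAntiOn (potential m p) (Icc 0 (m ^ ((1 : ℝ) / p))) := by
  refine strictAntiOn_of_deriv_neg (convex_Icc _ _) continuous_potential.continuousOn
    fun x hx => ?_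
  rw [interior_Icc] at hx
  have hx2p := (pow_two_mul_lt_sq_iff hm hp hx.1.le).2 hx.2
  rw [(potential_hasDerivAt m p x).deriv, pow_succ x (2 * p)]
  nlinarith [mul_lt_mul_of_pos_right hx2p hx.1]

theorem strictMonoOn_potential (hm : 0 < m) (hp : p ≠ 0) :
    StrictMonoOn (potential m p) (Ici (m ^ ((1 : ℝ) / p))) := by
  refine strictMonoOn_of_deriv_pos (convex_Ici _) continuous_potential.continuousOn
    fun x hx => ?_
  rw [interior_Ici] at hx
  rw [(potential_hasDerivAt m p x).deriv]
  nlinarith [sq_mul_lt_pow_of_rpow_lt hm hp hx]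

theorem potential_neg (hm : 0 < m) (hp : p ≠ 0) {x : ℝ} (hx : 0 < x)
    (hxM : x ≤ m ^ ((1 : ℝ) / p)) : potential m p x < 0 :=
  potential_zero (m := m) (p := p) ▸
    strictAntiOn_potential hm hp ⟨le_rfl, hx.le.trans hxM⟩ ⟨hx.le, hxM⟩ hx

theorem potential_le_max (hm : 0 < m) (hp : p ≠ 0) {u y v : ℝ} (hu : 0 ≤ u)
    (hy : y ∈ Icc u v) : potential m p y ≤ max (potential m p u) (potential m p v) := by
  rcases le_total y (m ^ ((1 : ℝ) / p)) with hyM | hMy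
  · exact le_max_of_le_left <| (strictAntiOn_potential hm hp).antitoneOn
      ⟨hu, hy.1.trans hyM⟩ ⟨hu.trans hy.1, hyM⟩ hy.1
  · exact le_max_of_le_right <| (strictMonoOn_potential hm hp).monotoneOn
      (mem_Ici.2 hMy) (mem_Ici.2 (hMy.trans hy.2)) hy.2

theorem exists_gt_potential_lt (hm : 0 < m) (hp : p ≠ 0) {y E : ℝ} (hy : 0 ≤ y)
    (hfy : potential m p y < E) :
    ∃ x, y ≤ x ∧ m ^ ((1 : ℝ) / p) < x ∧ potential m p x < E := by
  have hfz : potential m p (max y (m ^ ((1 : ℝ) / p))) < E := by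
    rcases le_total y (m ^ ((1 : ℝ) / p)) with h | h
    · rw [max_eq_right h]
      exact ((strictAntiOn_potential hm hp).antitoneOn ⟨hy, h⟩ ⟨hy.trans h, le_rfl⟩ h).trans_lt hfy
    · rwa [max_eq_left h]
  have hnear : ∀ᶠ x in 𝓝[>] max y (m ^ ((1 : ℝ) / p)), potential m p x < E :=
    nhdsWithin_le_nhds <| (continuous_potential.tendsto _).eventually (gt_mem_nhds hfz)
  obtain ⟨x, hfx, hzx⟩ := (hnear.and self_mem_nhdsWithin).exists
  exact ⟨x, (le_max_left _ _).trans hzx.le, (le_max_right _ _).trans_lt hzx, hfx⟩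

theorem sq_mul_sub_pow_le_of_le {x y : ℝ} (hx : 0 ≤ x) (hx2p : m ^ 2 ≤ x ^ (2 * p)) (hxy : x ≤ y) :
    m ^ 2 * y - y ^ (2 * p + 1) ≤ m ^ 2 * x - x ^ (2 * p + 1) := by
  have hpow : x ^ (2 * p) ≤ y ^ (2 * p) := pow_le_pow_left₀ hx hxy _
  rw [pow_succ x (2 * p), pow_succ y (2 * p)]
  nlinarith [mul_le_mul_of_nonneg_right hpow (hx.trans hxy),
    mul_le_mul_of_nonneg_right hx2p (sub_nonneg.2 hxy)]

end Potential

section Phases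

variable {m : ℝ} {p : ℕ} {a b : ℝ → ℝ}

theorem sub_le_div_sqrt_of_potential_le (hab : ∀ t, HasDerivAt a (b t) t) (hm : 0 < m) (hp : p ≠ 0)
    {E α x₁ ρ s t : ℝ} (hE : ∀ t, b t ^ 2 + potential m p (a t) = E) (hα : 0 ≤ α) (hρ : 0 < ρ)
    (hfρ : max (potential m p α) (potential m p x₁) ≤ E - ρ) (hst : s ≤ t)
    (hb : ∀ u ∈ Ioo s t, 0 ≤ b u) (ha : ∀ u ∈ Ioo s t, a u ∈ Icc α x₁) :
    t - s ≤ (a t - a s) / √ρ := by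
  have hspeed : ∀ u ∈ interior (Icc s t), √ρ ≤ deriv a u := by
    intro u hu
    rw [interior_Icc] at hu
    have hρb : ρ ≤ b u ^ 2 := by
      linarith [hE u, potential_le_max hm hp hα (ha u hu)]
    rw [(hab u).deriv]
    exact (Real.sqrt_le_sqrt hρb).trans_eq (Real.sqrt_sq (hb u hu))
  rw [le_div_iff₀' (by positivity)]
  exact (convex_Icc s t).mul_sub_le_image_sub_of_le_deriv
    (HasDerivAt.continuousOn fun u _ => hab u)
    (fun u _ => (hab u).differentiableAt.differentiableWithinAt) hspeed
    s (left_mem_Icc.2 hst) t (right_mem_Icc.2 hst) hst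

theorem sub_le_div_of_le_position (hb : ∀ t, HasDerivAt b (m ^ 2 * a t - a t ^ (2 * p + 1)) t)
    {x₁ s t : ℝ} (hx₁ : 0 < x₁) (hx₁2p : m ^ 2 < x₁ ^ (2 * p)) (hst : s ≤ t)
    (ha : ∀ u ∈ Ioo s t, x₁ ≤ a u) :
    t - s ≤ (b s - b t) / (x₁ ^ (2 * p + 1) - m ^ 2 * x₁) := by
  have hk : 0 < x₁ ^ (2 * p + 1) - m ^ 2 * x₁ := by
    rw [pow_succ x₁ (2 * p)]
    nlinarith
  have hdecel : ∀ u ∈ interior (Icc s t), deriv b u ≤ -(x₁ ^ (2 * p + 1) - m ^ 2 * x₁) := by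
    intro u hu
    rw [interior_Icc] at hu
    rw [(hb u).deriv]
    linarith [sq_mul_sub_pow_le_of_le hx₁.le hx₁2p.le (ha u hu)]
  rw [le_div_iff₀' hk]
  linarith [(convex_Icc s t).image_sub_le_mul_sub_of_deriv_le
    (HasDerivAt.continuousOn fun u _ => hb u)
    (fun u _ => (hb u).differentiableAt.differentiableWithinAt) hdecel
    s (left_mem_Icc.2 hst) t (right_mem_Icc.2 hst) hst]

end Phases

def IsSolution (m : ℝ) (p : ℕ) (a b : ℝ → ℝ) : Prop :=
  (∀ t, HasDerivAt a (b t) t) ∧ ∀ t, HasDerivAt b (m ^ 2 * a t - a t ^ (2 * p + 1)) t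

namespace IsSolution

variable {m : ℝ} {p : ℕ} {a b : ℝ → ℝ}

theorem continuous_fst (h : IsSolution m p a b) : Continuous a :=
  continuous_iff_continuousAt.2 fun t => (h.1 t).continuousAt

theorem continuous_snd (h : IsSolution m p a b) : Continuous b :=
  continuous_iff_continuousAt.2 fun t => (h.2 t).continuousAt

theorem energy_eq (h : IsSolution m p a b) (t s : ℝ) :
    b t ^ 2 + potential m p (a t) = b s ^ 2 + potential m p (a s) := by
  have hderiv (t : ℝ) : HasDerivAt (fun t => b t ^ 2 + potential m p (a t)) 0 t := by
    refine (((h.2 t).pow 2).add ((potential_hasDerivAt m p (a t)).comp t (h.1 t))).congr_deriv ?_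
    push_cast
    ring
  exact is_const_of_deriv_eq_zero (fun t => (hderiv t).differentiableAt)
    (fun t => (hderiv t).deriv) t s

theorem energy_eq_initial (h : IsSolution m p a b) {η : ℝ} (ha0 : a 0 = η) (hb0 : b 0 = 0)
    (t : ℝ) : b t ^ 2 + potential m p (a t) = potential m p η := by
  simpa [ha0, hb0] using h.energy_eq t 0

theorem sub_le_of_snd_nonneg (h : IsSolution m p a b) (hm : 0 < m) (hp : p ≠ 0)
    {E α x₁ ρ s t : ℝ} (hE : ∀ t, b t ^ 2 + potential m p (a t) = E) (hα : 0 ≤ α)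
    (hαx₁ : α ≤ x₁) (hx₁ : m ^ ((1 : ℝ) / p) < x₁) (hρ : 0 < ρ)
    (hfρ : max (potential m p α) (potential m p x₁) ≤ E - ρ) (hst : s ≤ t)
    (has : a s = α) (hb : ∀ u ∈ Icc s t, 0 ≤ b u) :
    t - s ≤ (x₁ - α) / √ρ + √(E - potential m p x₁) / (x₁ ^ (2 * p + 1) - m ^ 2 * x₁) := by
  have hx₁0 : 0 < x₁ := (by positivity : 0 < m ^ ((1 : ℝ) / p)).trans hx₁
  have hk : 0 < x₁ ^ (2 * p + 1) - m ^ 2 * x₁ := sub_pos.2 (sq_mul_lt_pow_of_rpow_lt hm hp hx₁)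
  have hmono : MonotoneOn a (Icc s t) :=
    monotoneOn_of_hasDerivWithinAt_nonneg (convex_Icc s t)
      (HasDerivAt.continuousOn fun u _ => h.1 u) (fun u _ => (h.1 u).hasDerivWithinAt)
      (fun u hu => hb u (interior_subset hu))
  have hclimb : ∀ r ∈ Icc s t, a r ≤ x₁ → r - s ≤ (x₁ - α) / √ρ := by
    intro r hr har
    have hsub : Ioo s r ⊆ Icc s t := Ioo_subset_Icc_self.trans (Icc_subset_Icc_right hr.2)
    refine (sub_le_div_sqrt_of_potential_le h.1 hm hp hE hα hρ hfρ hr.1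
      (fun u hu => hb u (hsub hu)) fun u hu => ⟨?_, ?_⟩).trans ?_
    · exact has ▸ hmono (left_mem_Icc.2 hst) (hsub hu) hu.1.le
    · exact (hmono (hsub hu) hr hu.2.le).trans har
    · rw [has]
      gcongr
  have hB : 0 ≤ √(E - potential m p x₁) / (x₁ ^ (2 * p + 1) - m ^ 2 * x₁) := by positivity
  rcases le_or_gt (a t) x₁ with hat | hat
  · linarith [hclimb t (right_mem_Icc.2 hst) hat]
  obtain ⟨r, hr, har⟩ := intermediate_value_Icc hst h.continuous_fst.continuousOn
    ⟨has ▸ hαx₁, hat.le⟩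
  have hbr : b r ≤ √(E - potential m p x₁) := by
    rw [← har, ← hE r, add_sub_cancel_right, Real.sqrt_sq_eq_abs]
    exact le_abs_self _
  have hbrake : t - r ≤ √(E - potential m p x₁) / (x₁ ^ (2 * p + 1) - m ^ 2 * x₁) := by
    refine (sub_le_div_of_le_position h.2 hx₁0 ((sq_lt_pow_two_mul_iff hm hp hx₁0.le).2 hx₁)
      hr.2 fun u hu => har ▸ hmono hr ⟨hr.1.trans hu.1.le, hu.2.le⟩ hu.1.le).trans ?_
    gcongr
    linarith [hb t (right_mem_Icc.2 hst)]
  linarith [hclimb r hr har.le]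

theorem exists_pos_snd_nonpos (h : IsSolution m p a b) (hm : 0 < m) (hp : p ≠ 0) {η : ℝ}
    (hη : 0 ≤ η) (ha0 : a 0 = η) (hb0 : b 0 = 0) : ∃ t > 0, b t ≤ 0 := by
  by_contra! hpos
  have hE := h.energy_eq_initial ha0 hb0
  have hη1 : η < a 1 := ha0 ▸ strictMonoOn_of_hasDerivWithinAt_pos (convex_Ici 0)
    h.continuous_fst.continuousOn (fun u _ => (h.1 u).hasDerivWithinAt)
    (fun u hu => hpos u (by rwa [interior_Ici] at hu)) self_mem_Ici (mem_Ici.2 zero_le_one)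
    one_pos
  have hf1 : potential m p (a 1) < potential m p η := by nlinarith [hE 1, hpos 1 one_pos]
  obtain ⟨x₁, h1x₁, hMx₁, hfx₁⟩ := exists_gt_potential_lt hm hp (hη.trans hη1.le) hf1
  -- From time `1` on, the energy gap `f η - f (a 1)` bounds the speed below while `a ≤ x₁`.
  set C := (x₁ - a 1) / √(potential m p η - max (potential m p (a 1)) (potential m p x₁)) +
    √(potential m p η - potential m p x₁) / (x₁ ^ (2 * p + 1) - m ^ 2 * x₁)
  have hC := h.sub_le_of_snd_nonneg hm hp hE (hη.trans hη1.le) h1x₁ hMx₁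
    (sub_pos.2 (max_lt hf1 hfx₁)) (sub_sub_cancel _ _).ge
    (by linarith [le_max_right C 0] : (1 : ℝ) ≤ 2 + max C 0) rfl
    (fun u hu => (hpos u (one_pos.trans_le hu.1)).le)
  linarith [le_max_left C 0]

theorem exists_turning_time (h : IsSolution m p a b) (hm : 0 < m) (hp : p ≠ 0) {η : ℝ}
    (hη : 0 < η) (hηM : η < m ^ ((1 : ℝ) / p)) (ha0 : a 0 = η) (hb0 : b 0 = 0) :
    ∃ T > 0, b T = 0 ∧ (∀ t ∈ Ioo 0 T, 0 < b t) ∧ m ^ ((1 : ℝ) / p) < a T ∧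
      potential m p (a T) = potential m p η := by
  have hforce : 0 < m ^ 2 * a 0 - a 0 ^ (2 * p + 1) := by
    rw [ha0, pow_succ η (2 * p)]
    linarith [mul_lt_mul_of_pos_right ((pow_two_mul_lt_sq_iff hm hp hη.le).2 hηM) hη]
  have ha := h.continuous_fst
  obtain ⟨s₀, hs₀, hpos⟩ := exists_Ioc_lt_of_deriv_pos h.2 (by fun_prop) hforce
  obtain ⟨T, hT, hbT, hbpos⟩ := exists_first_zero h.continuous_snd hs₀
    (fun t ht => hb0 ▸ hpos t ht) (h.exists_pos_snd_nonpos hm hp hη.le ha0 hb0)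
  have hfT : potential m p (a T) = potential m p η := by
    simpa [hbT] using h.energy_eq_initial ha0 hb0 T
  have hηT : η < a T := ha0 ▸ strictMonoOn_of_hasDerivWithinAt_pos (convex_Icc 0 T)
    ha.continuousOn (fun u _ => (h.1 u).hasDerivWithinAt)
    (fun u hu => hbpos u (by rwa [interior_Icc] at hu)) (left_mem_Icc.2 hT.le)
    (right_mem_Icc.2 hT.le) hT
  refine ⟨T, hT, hbT, hbpos, ?_, hfT⟩
  by_contra! hTM
  exact (strictAntiOn_potential hm hp ⟨hη.le, hηM.le⟩ ⟨(hη.trans hηT).le, hTM⟩ hηT).ne hfT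

end IsSolution

/-- for `0 < δ < m^{1/p}` there exist `η₀, C > 0` such that for all
`0 < η < η₀`, the solution with `a(0) = η`, `b(0) = 0` admits a time `T¹ > 0` with
`b(T¹) = 0`, `b > 0` on `(0,T¹)`, `a(T¹) > m^{1/p}`, `f(a(T¹)) = f(η)`, and
`0 < T¹ - τ_η ≤ C` where `τ_η` is the first time with `a(τ_η) = δ`. -/
theorem half_loop_time (m : ℝ) (p : ℕ) (hm : 0 < m) (hp : 1 ≤ p)
    (δ : ℝ) (hδ0 : 0 < δ) (hδ : δ < m ^ ((1 : ℝ) / p)) :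
    ∃ η₀ > 0, ∃ C > 0, ∀ η : ℝ, 0 < η → η < η₀ →
      ∀ a b : ℝ → ℝ,
        (∀ t : ℝ, HasDerivAt a (b t) t) →
        (∀ t : ℝ, HasDerivAt b (m ^ 2 * a t - a t ^ (2 * p + 1)) t) →
        a 0 = η → b 0 = 0 →
        ∃ T1 : ℝ, 0 < T1 ∧ b T1 = 0 ∧ (∀ t ∈ Set.Ioo 0 T1, 0 < b t) ∧
          m ^ ((1 : ℝ) / p) < a T1 ∧ potential m p (a T1) = potential m p η ∧
          ∀ τ : ℝ, 0 ≤ τ → a τ = δ → (∀ s : ℝ, 0 ≤ s → s < τ → a s ≠ δ) →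
            0 < T1 - τ ∧ T1 - τ ≤ C := by
  have hp0 : p ≠ 0 := by omega
  have hfδ : potential m p δ < 0 := potential_neg hm hp0 hδ0 hδ.le
  obtain ⟨x₁, hδx₁, hMx₁, hfx₁⟩ := exists_gt_potential_lt hm hp0 hδ0.le hfδ
  set L := max (potential m p δ) (potential m p x₁)
  have hL : L < 0 := max_lt hfδ hfx₁
  -- `L / 2 < f η` keeps the speed above `√(-L / 2)` while `a ∈ [δ, x₁]`, uniformly in `η`.
  obtain ⟨η₀, hη₀, hsmall⟩ : ∃ η₀ > 0, ∀ η ∈ Ioo 0 η₀, η < δ ∧ L / 2 < potential m p η :=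
    mem_nhdsGT_iff_exists_Ioo_subset.1 <| nhdsWithin_le_nhds <| (gt_mem_nhds hδ0).and <|
      (continuous_potential.tendsto' 0 0 potential_zero).eventually (lt_mem_nhds (by linarith))
  have hk : 0 < x₁ ^ (2 * p + 1) - m ^ 2 * x₁ := sub_pos.2 (sq_mul_lt_pow_of_rpow_lt hm hp0 hMx₁)
  refine ⟨η₀, hη₀, (x₁ - δ) / √(-L / 2) + √(-potential m p x₁) / (x₁ ^ (2 * p + 1) - m ^ 2 * x₁),
    by have := Real.sqrt_pos.2 (neg_pos.2 hfx₁); positivity, fun η hη hηη₀ a b ha hb ha0 hb0 => ?_⟩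
  have h : IsSolution m p a b := ⟨ha, hb⟩
  obtain ⟨hηδ, hLη⟩ := hsmall η ⟨hη, hηη₀⟩
  obtain ⟨T1, hT1, hbT1, hbpos, hMT1, hfT1⟩ :=
    h.exists_turning_time hm hp0 hη (hηδ.trans hδ) ha0 hb0
  refine ⟨T1, hT1, hbT1, hbpos, hMT1, hfT1, fun τ hτ0 haτ hfirst => ?_⟩
  have hτ : 0 < τ := hτ0.lt_of_ne (by rintro rfl; linarith)
  have hτT1 : τ < T1 := first_hit_lt h.continuous_fst hT1.le (ha0 ▸ hηδ.le) (hδ.trans hMT1) hfirst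
  refine ⟨sub_pos.2 hτT1, (h.sub_le_of_snd_nonneg (ρ := -L / 2) hm hp0
    (h.energy_eq_initial ha0 hb0) hδ0.le hδx₁ hMx₁ (by linarith) (by linarith) hτT1.le haτ
    fun u hu => ?_).trans ?_⟩
  · rcases hu.2.lt_or_eq with huT1 | rfl
    · exact (hbpos u ⟨hτ.trans_le hu.1, huT1⟩).le
    · exact hbT1.ge
  · gcongr
    linarith [potential_neg hm hp0 hη (hηδ.trans hδ).le]
end

section
/- Let m > 0 be real and p ≥ 1 an integer. There exist constants η₀ > 0, c > 0 and C > 0 (depending only on m and p) such that for every η with 0 < η < η₀, the solution (a,b) : ℝ → ℝ² of the planar system ȧ = b, ḃ = m²a - a^{2p+1} with a(0) = η, b(0) = 0 is periodic: there exists T_η > 0 with c·ln(1/η) ≤ T_η ≤ C·ln(1/η) such that a(t + T_η) = a(t) and b(t + T_η) = b(t) for all t ∈ ℝ. -/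
/-!
Conservation of `E = (p+1) b² - (p+1) m² a² + a^{2p+2}` keeps the orbit bounded and gives
`b² ≤ m² a²`, while the system is reversible: `(a, b)(2σ - t) = (a, -b)(t)` whenever `b σ = 0`.
Starting at `(η, 0)`, `b` becomes positive and returns to `0` at a first time `τ`; reflecting at
`0` and at `τ` makes `2τ` a period. Since `ȧ ≤ m a`, the orbit needs time at least
`(1/m) log(a(τ)/η)` to reach the turning point `a(τ)`, which is bounded below because `ḃ(τ) ≤ 0`.
Conversely, near the origin `b + (m/2) a` grows like `e^{mt/2}`, so `a` exceeds a fixed level `K`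
after time `O(log(1/η))`; afterwards the energy keeps `b` bounded below until `a` passes a level where `ḃ`
is uniformly negative, and from there `b` vanishes within a bounded time.
-/

open Set Filter Topology Real

theorem mul_sub_le_sub_of_le_hasDerivAt {f f' : ℝ → ℝ} {c s t : ℝ}
    (hf : ∀ x, HasDerivAt f (f' x) x) (hst : s ≤ t) (h : ∀ x ∈ Icc s t, c ≤ f' x) :
    c * (t - s) ≤ f t - f s :=
  (convex_Icc s t).mul_sub_le_image_sub_of_le_deriv
    (HasDerivAt.continuousOn fun x _ => hf x)
    (fun x _ => (hf x).differentiableAt.differentiableWithinAt)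
    (fun x hx => (hf x).deriv ▸ h x (interior_subset hx))
    s (left_mem_Icc.2 hst) t (right_mem_Icc.2 hst) hst

theorem sub_le_mul_sub_of_hasDerivAt_le {f f' : ℝ → ℝ} {c s t : ℝ}
    (hf : ∀ x, HasDerivAt f (f' x) x) (hst : s ≤ t) (h : ∀ x ∈ Icc s t, f' x ≤ c) :
    f t - f s ≤ c * (t - s) := by
  have := mul_sub_le_sub_of_le_hasDerivAt (f := fun x => -f x) (fun x => (hf x).neg) hst
    (fun x hx => neg_le_neg (h x hx))
  linarith

theorem le_mul_exp_of_hasDerivAt_le {f f' : ℝ → ℝ} {k t : ℝ}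
    (hf : ∀ x, HasDerivAt f (f' x) x) (ht : 0 ≤ t) (h : ∀ x ∈ Icc 0 t, f' x ≤ k * f x) :
    f t ≤ f 0 * exp (k * t) := by
  have hg : ∀ x, HasDerivAt (fun x => f x * exp (-(k * x)))
      ((f' x - k * f x) * exp (-(k * x))) x := fun x => by
    have hlin : HasDerivAt (fun x => -(k * x)) (-k) x := by
      simpa using ((hasDerivAt_id x).const_mul k).fun_neg
    exact ((hf x).mul hlin.exp).congr_deriv (by ring)
  have hdecr := sub_le_mul_sub_of_hasDerivAt_le hg ht fun x hx =>
    mul_nonpos_of_nonpos_of_nonneg (sub_nonpos.2 (h x hx)) (exp_pos _).le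
  have hexp : exp (-(k * t)) * exp (k * t) = 1 := by rw [← exp_add]; simp
  calc f t = f t * exp (-(k * t)) * exp (k * t) := by rw [mul_assoc, hexp, mul_one]
    _ ≤ f 0 * exp (k * t) := by
      gcongr
      simpa using hdecr

theorem mul_exp_le_of_le_hasDerivAt {f f' : ℝ → ℝ} {k t : ℝ}
    (hf : ∀ x, HasDerivAt f (f' x) x) (ht : 0 ≤ t) (h : ∀ x ∈ Icc 0 t, k * f x ≤ f' x) :
    f 0 * exp (k * t) ≤ f t := by
  have := le_mul_exp_of_hasDerivAt_le (f := fun x => -f x) (fun x => (hf x).neg) ht fun x hx => by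
    simpa using h x hx
  linarith

theorem HasDerivAt.eventually_pos_right_and_neg_left {f : ℝ → ℝ} {f' x : ℝ}
    (hf : HasDerivAt f f' x) (hx : f x = 0) (hf' : 0 < f') :
    (∀ᶠ y in 𝓝[>] x, 0 < f y) ∧ ∀ᶠ y in 𝓝[<] x, f y < 0 := by
  have hslope : ∀ᶠ y in 𝓝[≠] x, 0 < slope f x y :=
    (hasDerivAt_iff_tendsto_slope.1 hf).eventually (eventually_gt_nhds hf')
  refine ⟨?_, ?_⟩
  · filter_upwards [nhdsWithin_mono x (fun y hy => ne_of_gt hy) hslope, self_mem_nhdsWithin]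
      with y hy hxy using pos_of_slope_pos hxy hy hx
  · filter_upwards [nhdsWithin_mono x (fun y hy => ne_of_lt hy) hslope, self_mem_nhdsWithin]
      with y hy hxy using neg_of_slope_pos hxy hy hx

theorem exists_first_zero_of_eventually_pos {f : ℝ → ℝ} {x T : ℝ} (hf : Continuous f)
    (hpos : ∀ᶠ y in 𝓝[>] x, 0 < f y) (hxT : x < T) (hfT : f T ≤ 0) :
    ∃ τ ∈ Ioc x T, f τ = 0 ∧ ∀ t ∈ Ioo x τ, 0 < f t := by
  obtain ⟨u, hxu : x < u, hu⟩ := mem_nhdsGT_iff_exists_Ioo_subset.1 hpos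
  set s := (x + min u T) / 2
  have hxs : x < s := by have := lt_min hxu hxT; simp only [s]; linarith
  have hsu : s < u := by have := min_le_left u T; simp only [s]; linarith
  have hsT : s < T := by have := min_le_right u T; simp only [s]; linarith
  have hfs : 0 < f s := hu ⟨hxs, hsu⟩
  obtain ⟨τ, ⟨⟨hsτ, hτT⟩, hfτ⟩, hτleast⟩ :=
    (isCompact_Icc.inter_right (isClosed_Iic.preimage hf) :
      IsCompact (Icc s T ∩ f ⁻¹' Iic 0)).exists_isLeast ⟨T, ⟨hsT.le, le_rfl⟩, hfT⟩
  have hpos_before : ∀ t ∈ Ioo x τ, 0 < f t := by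
    intro t ⟨hxt, htτ⟩
    rcases lt_or_ge t u with htu | hut
    · exact hu ⟨hxt, htu⟩
    · by_contra hft
      exact absurd (hτleast ⟨⟨by linarith, by linarith⟩, not_lt.1 hft⟩) (not_le.2 htτ)
  refine ⟨τ, ⟨by linarith, hτT⟩, le_antisymm hfτ ?_, hpos_before⟩
  obtain ⟨c, ⟨hsc, hcτ⟩, hfc⟩ := intermediate_value_Icc' hsτ hf.continuousOn ⟨hfτ, hfs.le⟩
  have hτc : τ ≤ c := hτleast ⟨⟨hsc, hcτ.trans hτT⟩, hfc.le⟩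
  rw [← le_antisymm hcτ hτc, hfc]

theorem eq_of_hasDerivAt_of_locallyLipschitz {E : Type*} [NormedAddCommGroup E]
    [NormedSpace ℝ E] {v : E → E} (hv : LocallyLipschitz v) {f g : ℝ → E}
    (hf : ∀ t, HasDerivAt f (v (f t)) t) (hg : ∀ t, HasDerivAt g (v (g t)) t) {t₀ : ℝ}
    (heq : f t₀ = g t₀) : f = g := by
  funext t
  set I := Icc (min t t₀ - 1) (max t t₀ + 1)
  have hcont : ∀ h : ℝ → E, (∀ t, HasDerivAt h (v (h t)) t) → IsCompact (h '' I) :=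
    fun h hh => isCompact_Icc.image (continuous_iff_continuousAt.2 fun t => (hh t).continuousAt)
  obtain ⟨K, hK⟩ := hv.locallyLipschitzOn.exists_lipschitzOnWith_of_compact
    ((hcont f hf).union (hcont g hg))
  have hmem : ∀ u ∈ Ioo (min t t₀ - 1) (max t t₀ + 1), u ∈ I := fun u hu => Ioo_subset_Icc_self hu
  exact ODE_solution_unique_of_mem_Ioo (v := fun _ => v) (s := fun _ => f '' I ∪ g '' I)
    (fun _ _ => hK) (t₀ := t₀) ⟨by grind, by grind⟩
    (fun u hu => ⟨hf u, Or.inl (mem_image_of_mem f (hmem u hu))⟩)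
    (fun u hu => ⟨hg u, Or.inr (mem_image_of_mem g (hmem u hu))⟩) heq ⟨by grind, by grind⟩

namespace DoubleWell

structure IsSolution (m : ℝ) (p : ℕ) (a b : ℝ → ℝ) : Prop where
  hasDerivAt_a : ∀ t, HasDerivAt a (b t) t
  hasDerivAt_b : ∀ t, HasDerivAt b (m ^ 2 * a t - a t ^ (2 * p + 1)) t

/-- `-2(p+1)` times the potential energy `a^{2p+2}/(2p+2) - m²a²/2`, so that
`(p+1) b² - V m p a` is conserved. -/
def V (m : ℝ) (p : ℕ) (x : ℝ) : ℝ := (p + 1) * m ^ 2 * x ^ 2 - x ^ (2 * p + 2)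

noncomputable def radius (m : ℝ) (p : ℕ) (c : ℝ) : ℝ := (c * m ^ 2) ^ (((2 * p : ℕ) : ℝ)⁻¹)

/-- Below `K = radius m p (1/2)` the quantity `b + (m/2) a` grows like `e^{mt/2}`; between `K`
and `A = radius m p ((p+2)/2)` the energy forces `b ≥ mK/3`; beyond `A`, `ḃ ≤ -A m²/2` while
`b ≤ m R` with `R = radius m p (p+1)`. The three terms bound the time spent in each region. -/
noncomputable def turnTime (m : ℝ) (p : ℕ) (η : ℝ) : ℝ :=
  2 / m * log (4 * radius m p (1 / 2) / η)
    + 3 * (radius m p ((p + 2) / 2) - radius m p (1 / 2)) / (m * radius m p (1 / 2))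
    + 2 * radius m p (p + 1) / (radius m p ((p + 2) / 2) * m)

variable {m : ℝ} {p : ℕ} {a b : ℝ → ℝ} {c d x : ℝ}

theorem radius_nonneg (hc : 0 ≤ c) : 0 ≤ radius m p c := rpow_nonneg (by positivity) _

theorem radius_pos (hm : m ≠ 0) (hc : 0 < c) : 0 < radius m p c :=
  rpow_pos_of_pos (by positivity) _

theorem radius_le_radius (hc : 0 ≤ c) (hcd : c ≤ d) : radius m p c ≤ radius m p d :=
  rpow_le_rpow (by positivity) (by gcongr) (by positivity)

theorem radius_pow (hp : p ≠ 0) (hc : 0 ≤ c) : radius m p c ^ (2 * p) = c * m ^ 2 :=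
  rpow_inv_natCast_pow (by positivity) (by omega)

theorem le_radius_iff (hp : p ≠ 0) (hc : 0 ≤ c) (hx : 0 ≤ x) :
    x ≤ radius m p c ↔ x ^ (2 * p) ≤ c * m ^ 2 := by
  rw [← pow_le_pow_iff_left₀ hx (radius_nonneg hc) (by omega : 2 * p ≠ 0), radius_pow hp hc]

theorem radius_le_iff (hp : p ≠ 0) (hc : 0 ≤ c) (hx : 0 ≤ x) :
    radius m p c ≤ x ↔ c * m ^ 2 ≤ x ^ (2 * p) := by
  rw [← pow_le_pow_iff_left₀ (radius_nonneg hc) hx (by omega : 2 * p ≠ 0), radius_pow hp hc]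

theorem V_eq (x : ℝ) : V m p x = x ^ 2 * ((p + 1) * m ^ 2 - x ^ (2 * p)) := by
  rw [V, pow_add]; ring

theorem V_le (x : ℝ) : V m p x ≤ (p + 1) * m ^ 2 * x ^ 2 := by
  have : 0 ≤ x ^ (2 * p + 2) := Even.pow_nonneg ⟨p + 1, by ring⟩ x
  rw [V]; linarith

theorem abs_le_radius_of_V_nonneg (hp : p ≠ 0) (hV : 0 ≤ V m p x) :
    |x| ≤ radius m p (p + 1) := by
  rcases eq_or_ne x 0 with rfl | hx
  · simpa using radius_nonneg (by positivity)
  rw [V_eq] at hV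
  rw [le_radius_iff hp (by positivity) (abs_nonneg x), (even_two_mul p).pow_abs]
  nlinarith [nonneg_of_mul_nonneg_right hV (by positivity)]

theorem V_ge_of_le_radius (hp : 1 ≤ p) {y : ℝ} (hy : 0 ≤ y) (hyx : y ≤ x)
    (hx : x ≤ radius m p ((p + 2) / 2)) : p * m ^ 2 * y ^ 2 / 2 ≤ V m p x := by
  rw [le_radius_iff (by omega) (by positivity) (hy.trans hyx)] at hx
  have hp' : (1 : ℝ) ≤ p := by exact_mod_cast hp
  have hyx2 := pow_le_pow_left₀ hy hyx 2
  rw [V_eq]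
  calc p * m ^ 2 * y ^ 2 / 2 ≤ x ^ 2 * (p * m ^ 2 / 2) := by
        nlinarith [mul_nonneg (sq_nonneg m) (by positivity : (0 : ℝ) ≤ p)]
    _ ≤ x ^ 2 * ((p + 1) * m ^ 2 - x ^ (2 * p)) := by gcongr; linarith

theorem exists_turnTime_le_mul_log (hm : 0 < m) :
    ∃ C > 0, ∀ η, 0 < η → η ≤ exp (-1) → turnTime m p η ≤ C * log (1 / η) := by
  set K := radius m p (1 / 2)
  set A := radius m p ((p + 2) / 2)
  have hK : 0 < K := radius_pos hm.ne' (by norm_num)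
  have hA : 0 < A := radius_pos hm.ne' (by positivity)
  have hR : 0 < radius m p (p + 1) := radius_pos hm.ne' (by positivity)
  have hKA : K ≤ A := radius_le_radius (by norm_num) (by linarith [p.cast_nonneg (α := ℝ)])
  set D := 3 * (A - K) / (m * K) + 2 * radius m p (p + 1) / (A * m)
  have hD : 0 ≤ D := add_nonneg (div_nonneg (by linarith) (by positivity)) (by positivity)
  refine ⟨2 / m * (|log (4 * K)| + 1) + D, add_pos_of_pos_of_nonneg (by positivity) hD,
    fun η hη hη₁ => ?_⟩
  have hX : 1 ≤ log (1 / η) := by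
    have := log_le_log hη hη₁
    rw [log_exp] at this
    rw [one_div, log_inv]
    linarith
  set X := log (1 / η)
  have hlog : log (4 * K / η) = log (4 * K) + X := by
    rw [div_eq_mul_one_div, log_mul (by positivity) (by positivity)]
  calc turnTime m p η = 2 / m * (log (4 * K) + X) + D := by
        rw [turnTime, hlog]; ring
    _ ≤ 2 / m * ((|log (4 * K)| + 1) * X) + D * X := by
        gcongr
        · nlinarith [le_abs_self (log (4 * K)), abs_nonneg (log (4 * K))]
        · exact le_mul_of_one_le_right hD hX
    _ = (2 / m * (|log (4 * K)| + 1) + D) * X := by ring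

namespace IsSolution

theorem energy_eq (hs : IsSolution m p a b) (t s : ℝ) :
    (p + 1) * b t ^ 2 - V m p (a t) = (p + 1) * b s ^ 2 - V m p (a s) := by
  have hE : ∀ u, HasDerivAt (fun u => (p + 1) * b u ^ 2 - V m p (a u)) 0 u := fun u => by
    have ha := hs.hasDerivAt_a u
    have hpow := ha.pow (2 * p + 2)
    rw [show 2 * p + 2 - 1 = 2 * p + 1 by omega] at hpow
    refine ((((hs.hasDerivAt_b u).pow 2).const_mul _).sub
      (((ha.pow 2).const_mul _).sub hpow)).congr_deriv ?_
    push_cast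
    ring
  exact is_const_of_deriv_eq_zero (fun u => (hE u).differentiableAt) (fun u => (hE u).deriv) t s

theorem reflect (hs : IsSolution m p a b) {σ : ℝ} (hσ : b σ = 0) (t : ℝ) :
    a (2 * σ - t) = a t ∧ b (2 * σ - t) = -b t := by
  set v : ℝ × ℝ → ℝ × ℝ := fun z => (z.2, m ^ 2 * z.1 - z.1 ^ (2 * p + 1))
  have hv : LocallyLipschitz v := ContDiff.locallyLipschitz (𝕂 := ℝ) (by fun_prop)
  have hrefl : ∀ u, HasDerivAt (fun u => 2 * σ - u) (-1) u := fun u => by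
    simpa using (hasDerivAt_id u).const_sub (2 * σ)
  have hsol := eq_of_hasDerivAt_of_locallyLipschitz hv (t₀ := σ)
    (f := fun u => (a u, b u)) (g := fun u => (a (2 * σ - u), -b (2 * σ - u)))
    (fun u => (hs.hasDerivAt_a u).prodMk (hs.hasDerivAt_b u))
    (fun u => by
      refine (((hs.hasDerivAt_a _).comp u (hrefl u)).prodMk
        ((hs.hasDerivAt_b _).comp u (hrefl u)).neg).congr_deriv ?_
      simp only [v, Prod.mk.injEq]
      constructor <;> ring)
    (by simp [show 2 * σ - σ = σ by ring, hσ])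
  have := congrFun hsol t
  simp only [Prod.mk.injEq] at this
  exact ⟨this.1.symm, by rw [this.2, neg_neg]⟩

theorem periodic (hs : IsSolution m p a b) {τ : ℝ} (h0 : b 0 = 0) (hτ : b τ = 0) (t : ℝ) :
    a (t + 2 * τ) = a t ∧ b (t + 2 * τ) = b t := by
  have hτt := hs.reflect hτ (-t)
  have h0t := hs.reflect h0 t
  rw [show 2 * τ - -t = t + 2 * τ by ring] at hτt
  rw [mul_zero, zero_sub] at h0t
  rw [hτt.1, hτt.2, h0t.1, h0t.2, neg_neg]
  exact ⟨rfl, rfl⟩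

theorem monotoneOn (hs : IsSolution m p a b) {s t : ℝ} (h : ∀ u ∈ Icc s t, 0 ≤ b u) :
    MonotoneOn a (Icc s t) := fun x hx y hy hxy => by
  have := mul_sub_le_sub_of_le_hasDerivAt (c := 0) hs.hasDerivAt_a hxy fun u hu =>
    h u ⟨hx.1.trans hu.1, hu.2.trans hy.2⟩
  linarith

theorem b_sub_le_of_radius_le (hs : IsSolution m p a b) (hp : 1 ≤ p) (hm : m ≠ 0)
    {s t : ℝ} (hst : s ≤ t) (h : ∀ u ∈ Icc s t, radius m p ((p + 2) / 2) ≤ a u) :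
    b t - b s ≤ -(radius m p ((p + 2) / 2) * m ^ 2 / 2) * (t - s) := by
  refine sub_le_mul_sub_of_hasDerivAt_le hs.hasDerivAt_b hst fun u hu => ?_
  have hA := radius_pos (p := p) hm (c := (p + 2) / 2) (by positivity)
  have hau := h u hu
  rw [radius_le_iff (by omega) (by positivity) (hA.le.trans hau)] at hau
  have hp' : (1 : ℝ) ≤ p := by exact_mod_cast hp
  have hgap : m ^ 2 - a u ^ (2 * p) ≤ -(m ^ 2 / 2) := by nlinarith [sq_nonneg m]
  calc m ^ 2 * a u - a u ^ (2 * p + 1) = a u * (m ^ 2 - a u ^ (2 * p)) := by ring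
    _ ≤ a u * -(m ^ 2 / 2) := mul_le_mul_of_nonneg_left hgap (hA.le.trans (h u hu))
    _ ≤ -(radius m p ((p + 2) / 2) * m ^ 2 / 2) := by nlinarith [h u hu, sq_nonneg m]

end IsSolution

structure IsSmallOrbit (m : ℝ) (p : ℕ) (η : ℝ) (a b : ℝ → ℝ) : Prop
    extends IsSolution m p a b where
  a_zero : a 0 = η
  b_zero : b 0 = 0
  pos : 0 < η
  four_mul_le : 4 * η ≤ radius m p (1 / 2)

namespace IsSmallOrbit

variable {η : ℝ}

theorem init_pow_le (hs : IsSmallOrbit m p η a b) (hp : p ≠ 0) : η ^ (2 * p) ≤ m ^ 2 / 2 := by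
  have := (le_radius_iff hp (by norm_num) hs.pos.le).1
    (by linarith [hs.pos, hs.four_mul_le] : η ≤ radius m p (1 / 2))
  linarith

theorem V_init_nonneg (hs : IsSmallOrbit m p η a b) (hp : p ≠ 0) : 0 ≤ V m p η := by
  have := hs.init_pow_le hp
  rw [V_eq]
  exact mul_nonneg (sq_nonneg η) (by nlinarith [sq_nonneg m])

theorem V_init_le (hs : IsSmallOrbit m p η a b) (hp : 1 ≤ p) :
    V m p η ≤ p * m ^ 2 * radius m p (1 / 2) ^ 2 / 8 := by
  have hη : η ^ 2 ≤ radius m p (1 / 2) ^ 2 / 16 := by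
    nlinarith [hs.four_mul_le, hs.pos]
  have hp' : (1 : ℝ) ≤ p := by exact_mod_cast hp
  calc V m p η ≤ (p + 1) * m ^ 2 * η ^ 2 := V_le η
    _ ≤ (p + 1) * m ^ 2 * (radius m p (1 / 2) ^ 2 / 16) := by gcongr
    _ ≤ p * m ^ 2 * radius m p (1 / 2) ^ 2 / 8 := by
      nlinarith [mul_nonneg (sq_nonneg m) (sq_nonneg (radius m p (1 / 2)))]

theorem energy (hs : IsSmallOrbit m p η a b) (t : ℝ) :
    (p + 1) * b t ^ 2 = V m p (a t) - V m p η := by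
  have := hs.energy_eq t 0
  rw [hs.a_zero, hs.b_zero] at this
  linarith

theorem b_sq_le (hs : IsSmallOrbit m p η a b) (hp : p ≠ 0) (t : ℝ) :
    b t ^ 2 ≤ m ^ 2 * a t ^ 2 := by
  nlinarith [hs.energy t, hs.V_init_nonneg hp, V_le (m := m) (p := p) (a t)]

theorem b_le_mul_a (hs : IsSmallOrbit m p η a b) (hp : p ≠ 0) (hm : 0 ≤ m) {t : ℝ}
    (ht : 0 ≤ a t) : b t ≤ m * a t :=
  le_of_sq_le_sq (by rw [mul_pow]; exact hs.b_sq_le hp t) (mul_nonneg hm ht)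

theorem b_le_mul_radius (hs : IsSmallOrbit m p η a b) (hp : p ≠ 0) (hm : 0 ≤ m) (t : ℝ) :
    b t ≤ m * radius m p (p + 1) := by
  have ha : |a t| ≤ radius m p (p + 1) := abs_le_radius_of_V_nonneg hp <| by
    nlinarith [hs.energy t, hs.V_init_nonneg hp, sq_nonneg (b t)]
  have hb : |b t| ≤ m * |a t| :=
    abs_le_of_sq_le_sq (by rw [mul_pow, sq_abs]; exact hs.b_sq_le hp t) (by positivity)
  calc b t ≤ |b t| := le_abs_self _
    _ ≤ m * |a t| := hb
    _ ≤ m * radius m p (p + 1) := by gcongr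

theorem mul_radius_div_three_le_b (hs : IsSmallOrbit m p η a b) (hp : 1 ≤ p) {t : ℝ}
    (hKa : radius m p (1 / 2) ≤ a t) (haA : a t ≤ radius m p ((p + 2) / 2)) (hb : 0 ≤ b t) :
    m * radius m p (1 / 2) / 3 ≤ b t := by
  have hK := radius_nonneg (m := m) (p := p) (c := 1 / 2) (by norm_num)
  have hV := V_ge_of_le_radius hp hK hKa haA
  have hp' : (1 : ℝ) ≤ p := by exact_mod_cast hp
  have hsq : (m * radius m p (1 / 2) / 3) ^ 2 ≤ b t ^ 2 := by
    nlinarith [hs.energy t, hs.V_init_le hp,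
      mul_nonneg (sq_nonneg m) (sq_nonneg (radius m p (1 / 2)))]
  exact le_of_sq_le_sq hsq hb

theorem mul_exp_le_of_le_radius (hs : IsSmallOrbit m p η a b) (hp : p ≠ 0) (hm : 0 < m)
    {T : ℝ} (hT : 0 ≤ T) (h : ∀ t ∈ Icc 0 T, 0 ≤ a t ∧ a t ≤ radius m p (1 / 2)) :
    η * exp (m / 2 * T) ≤ 3 * radius m p (1 / 2) := by
  have hgrowth := mul_exp_le_of_le_hasDerivAt (k := m / 2) (f := fun t => b t + m / 2 * a t)
    (fun t => (hs.hasDerivAt_b t).add ((hs.hasDerivAt_a t).const_mul (m / 2))) hT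
    fun t ht => by
      obtain ⟨ha0, haK⟩ := h t ht
      have hpow := (le_radius_iff hp (by norm_num) ha0).1 haK
      have : a t ^ (2 * p + 1) ≤ m ^ 2 / 2 * a t := by
        rw [pow_succ]; exact mul_le_mul_of_nonneg_right (by linarith) ha0
      nlinarith [mul_nonneg (sq_nonneg m) ha0]
  obtain ⟨haT0, haTK⟩ := h T ⟨hT, le_rfl⟩
  have hbT := hs.b_le_mul_a hp hm.le haT0
  rw [hs.a_zero, hs.b_zero] at hgrowth
  nlinarith [exp_pos (m / 2 * T)]

theorem b_nonneg_of_pos (hs : IsSmallOrbit m p η a b) {T : ℝ} (hpos : ∀ t ∈ Ioo 0 T, 0 < b t)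
    (hT : 0 ≤ b T) : ∀ t ∈ Icc 0 T, 0 ≤ b t := by
  intro t ⟨h0t, htT⟩
  rcases h0t.eq_or_lt with rfl | h0t
  · exact hs.b_zero.ge
  rcases htT.lt_or_eq with htT | rfl
  · exact (hpos t ⟨h0t, htT⟩).le
  · exact hT

theorem radius_lt_a_of_b_nonneg (hs : IsSmallOrbit m p η a b) (hp : p ≠ 0) (hm : 0 < m)
    (hnn : ∀ t ∈ Icc 0 (2 / m * log (4 * radius m p (1 / 2) / η)), 0 ≤ b t) :
    radius m p (1 / 2) < a (2 / m * log (4 * radius m p (1 / 2) / η)) := by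
  set K := radius m p (1 / 2)
  set T := 2 / m * log (4 * K / η)
  have hK : 0 < K := radius_pos hm.ne' (by norm_num)
  have hη := hs.pos
  have hT : 0 ≤ T := mul_nonneg (by positivity)
    (log_nonneg ((one_le_div hη).2 (by linarith [hs.four_mul_le])))
  by_contra! haK
  have hmono := hs.monotoneOn hnn
  have := hs.mul_exp_le_of_le_radius hp hm hT fun t ht =>
    ⟨hη.le.trans (hs.a_zero ▸ hmono ⟨le_rfl, hT⟩ ht ht.1), (hmono ht ⟨hT, le_rfl⟩ ht.2).trans haK⟩
  rw [show m / 2 * T = log (4 * K / η) by simp only [T]; field_simp,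
    exp_log (by positivity), mul_div_cancel₀ _ hη.ne'] at this
  linarith

theorem radius_lt_a_add (hs : IsSmallOrbit m p η a b) (hp : 1 ≤ p) (hm : 0 < m) {s : ℝ}
    (hs_lt : radius m p (1 / 2) < a s)
    (hnn : ∀ t ∈ Icc s (s + 3 * (radius m p ((p + 2) / 2) - radius m p (1 / 2)) /
      (m * radius m p (1 / 2))), 0 ≤ b t) :
    radius m p ((p + 2) / 2) < a (s + 3 * (radius m p ((p + 2) / 2) - radius m p (1 / 2)) /
      (m * radius m p (1 / 2))) := by
  set K := radius m p (1 / 2)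
  set A := radius m p ((p + 2) / 2)
  set T := 3 * (A - K) / (m * K)
  have hK : 0 < K := radius_pos hm.ne' (by norm_num)
  have hKA : K ≤ A := radius_le_radius (by norm_num) (by linarith [p.cast_nonneg (α := ℝ)])
  have hT : 0 ≤ T := div_nonneg (by linarith) (by positivity)
  have hmono := hs.monotoneOn hnn
  by_contra! haA
  have := mul_sub_le_sub_of_le_hasDerivAt hs.hasDerivAt_a (le_add_of_nonneg_right hT)
    fun t ht => hs.mul_radius_div_three_le_b hp
      (hs_lt.le.trans (hmono ⟨le_rfl, by linarith⟩ ht ht.1))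
      ((hmono ht ⟨by linarith, le_rfl⟩ ht.2).trans haA) (hnn t ht)
  rw [add_sub_cancel_left, show m * K / 3 * T = A - K by simp only [T]; field_simp] at this
  linarith

theorem b_add_nonpos (hs : IsSmallOrbit m p η a b) (hp : 1 ≤ p) (hm : 0 < m) {s : ℝ}
    (hs_le : radius m p ((p + 2) / 2) ≤ a s)
    (hnn : ∀ t ∈ Icc s (s + 2 * radius m p (p + 1) / (radius m p ((p + 2) / 2) * m)), 0 ≤ b t) :
    b (s + 2 * radius m p (p + 1) / (radius m p ((p + 2) / 2) * m)) ≤ 0 := by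
  set A := radius m p ((p + 2) / 2)
  set T := 2 * radius m p (p + 1) / (A * m)
  have hA : 0 < A := radius_pos hm.ne' (by positivity)
  have hR : 0 < radius m p (p + 1) := radius_pos hm.ne' (by positivity)
  have hT : 0 ≤ T := by positivity
  have hdecr : b (s + T) - b s ≤ -(A * m ^ 2 / 2) * (s + T - s) :=
    hs.b_sub_le_of_radius_le hp hm.ne' (le_add_of_nonneg_right hT) fun t ht =>
      hs_le.trans (hs.monotoneOn hnn ⟨le_rfl, by linarith⟩ ht ht.1)
  rw [add_sub_cancel_left, neg_mul, show A * m ^ 2 / 2 * T = m * radius m p (p + 1) by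
    simp only [T]; field_simp] at hdecr
  linarith [hs.b_le_mul_radius (by omega) hm.le s]

theorem exists_b_nonpos (hs : IsSmallOrbit m p η a b) (hp : 1 ≤ p) (hm : 0 < m) :
    ∃ t ∈ Ioc 0 (turnTime m p η), b t ≤ 0 := by
  set K := radius m p (1 / 2)
  set A := radius m p ((p + 2) / 2)
  have hK : 0 < K := radius_pos hm.ne' (by norm_num)
  have hA : 0 < A := radius_pos hm.ne' (by positivity)
  have hR : 0 < radius m p (p + 1) := radius_pos hm.ne' (by positivity)
  have hKA : K ≤ A := radius_le_radius (by norm_num) (by linarith [p.cast_nonneg (α := ℝ)])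
  set T₁ := 2 / m * log (4 * K / η)
  set T₂ := 3 * (A - K) / (m * K)
  set T₃ := 2 * radius m p (p + 1) / (A * m)
  have hT₁ : 0 < T₁ := mul_pos (by positivity)
    (log_pos ((one_lt_div hs.pos).2 (by linarith [hs.four_mul_le, hs.pos])))
  have hT₂ : 0 ≤ T₂ := div_nonneg (by linarith) (by positivity)
  have hT₃ : 0 ≤ T₃ := by positivity
  rw [show turnTime m p η = T₁ + T₂ + T₃ from rfl]
  by_contra! hpos
  have hnn := hs.b_nonneg_of_pos (fun t ht => hpos t ⟨ht.1, ht.2.le⟩)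
    (hpos _ ⟨by linarith, le_rfl⟩).le
  have hnn' : ∀ {s t}, 0 ≤ s → t ≤ T₁ + T₂ + T₃ → ∀ u ∈ Icc s t, 0 ≤ b u :=
    fun hs ht u hu => hnn u ⟨hs.trans hu.1, hu.2.trans ht⟩
  have hK := hs.radius_lt_a_of_b_nonneg (by omega) hm (hnn' le_rfl (by linarith))
  have hA := hs.radius_lt_a_add hp hm hK (hnn' hT₁.le (by linarith))
  have hb := hs.b_add_nonpos hp hm hA.le (hnn' (by linarith) le_rfl)
  linarith [hpos _ ⟨by linarith, le_rfl⟩]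

theorem exists_first_turn (hs : IsSmallOrbit m p η a b) (hp : 1 ≤ p) (hm : 0 < m) :
    ∃ τ ∈ Ioc 0 (turnTime m p η), b τ = 0 ∧ ∀ t ∈ Ioo 0 τ, 0 < b t := by
  obtain ⟨T, ⟨hT, hTle⟩, hbT⟩ := hs.exists_b_nonpos hp hm
  have hb'0 : 0 < m ^ 2 * a 0 - a 0 ^ (2 * p + 1) := by
    rw [hs.a_zero, pow_succ η]
    nlinarith [hs.init_pow_le (by omega), hs.pos, mul_pos (pow_pos hm 2) hs.pos]
  obtain ⟨τ, ⟨hτ, hτT⟩, hbτ, hpos⟩ := exists_first_zero_of_eventually_pos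
    (continuous_iff_continuousAt.2 fun t => (hs.hasDerivAt_b t).continuousAt)
    ((hs.hasDerivAt_b 0).eventually_pos_right_and_neg_left hs.b_zero hb'0).1 hT hbT
  exact ⟨τ, ⟨hτ, hτT.trans hTle⟩, hbτ, hpos⟩

theorem radius_le_a_of_turn (hs : IsSmallOrbit m p η a b) (hp : p ≠ 0) {τ : ℝ} (hτ : 0 < τ)
    (hbτ : b τ = 0) (hpos : ∀ t ∈ Ioo 0 τ, 0 < b t) : radius m p (1 / 2) ≤ a τ := by
  have haτ : 0 < a τ := hs.pos.trans_le <| hs.a_zero ▸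
    hs.monotoneOn (hs.b_nonneg_of_pos hpos hbτ.ge) ⟨le_rfl, hτ.le⟩ ⟨hτ.le, le_rfl⟩ hτ.le
  have hb'τ : m ^ 2 * a τ - a τ ^ (2 * p + 1) ≤ 0 := by
    by_contra! h
    obtain ⟨t, hbt, ht⟩ := (((hs.hasDerivAt_b τ).eventually_pos_right_and_neg_left hbτ h).2.and
      (Ioo_mem_nhdsLT hτ)).exists
    exact (hpos t ht).not_gt hbt
  rw [pow_succ (a τ)] at hb'τ
  rw [radius_le_iff hp (by norm_num) haτ.le]
  nlinarith [sq_nonneg m]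

theorem a_le_mul_exp (hs : IsSmallOrbit m p η a b) (hp : p ≠ 0) (hm : 0 ≤ m) {τ : ℝ}
    (hτ : 0 ≤ τ) (hnn : ∀ t ∈ Icc 0 τ, 0 ≤ b t) : a τ ≤ η * exp (m * τ) := by
  have := le_mul_exp_of_hasDerivAt_le hs.hasDerivAt_a hτ fun t ht =>
    hs.b_le_mul_a hp hm <| hs.pos.le.trans <| hs.a_zero ▸
      hs.monotoneOn hnn ⟨le_rfl, hτ⟩ ht ht.1
  rwa [hs.a_zero] at this

theorem log_inv_le_of_turn (hs : IsSmallOrbit m p η a b) (hp : p ≠ 0) (hm : 0 < m)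
    (hηK : η ≤ radius m p (1 / 2) ^ 2) {τ : ℝ} (hτ : 0 < τ) (hbτ : b τ = 0)
    (hpos : ∀ t ∈ Ioo 0 τ, 0 < b t) : log (1 / η) ≤ m * (2 * τ) := by
  have hK : 0 < radius m p (1 / 2) := radius_pos hm.ne' (by norm_num)
  have hlogK : log η ≤ 2 * log (radius m p (1 / 2)) := by
    simpa using log_le_log hs.pos hηK
  have hturn := log_le_log hK <| (hs.radius_le_a_of_turn hp hτ hbτ hpos).trans
    (hs.a_le_mul_exp hp hm.le hτ.le (hs.b_nonneg_of_pos hpos hbτ.ge))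
  rw [log_mul hs.pos.ne' (exp_pos _).ne', log_exp] at hturn
  rw [one_div, log_inv]
  linarith

end IsSmallOrbit

end DoubleWell

/-- for `η` small, the solution of `ȧ = b`, `ḃ = m²a - a^{2p+1}` with
`a(0) = η`, `b(0) = 0` is periodic with period `T_η` of order `ln(1/η)`. -/
theorem periodic_orbit_period (m : ℝ) (p : ℕ) (hm : 0 < m) (hp : 1 ≤ p) :
    ∃ η₀ > 0, ∃ c > 0, ∃ C > 0, ∀ η : ℝ, 0 < η → η < η₀ →
      ∀ a b : ℝ → ℝ,
        (∀ t : ℝ, HasDerivAt a (b t) t) →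
        (∀ t : ℝ, HasDerivAt b (m ^ 2 * a t - a t ^ (2 * p + 1)) t) →
        a 0 = η → b 0 = 0 →
        ∃ T : ℝ, 0 < T ∧ c * Real.log (1 / η) ≤ T ∧ T ≤ C * Real.log (1 / η) ∧
          ∀ t : ℝ, a (t + T) = a t ∧ b (t + T) = b t := by
  set K := DoubleWell.radius m p (1 / 2)
  have hK : 0 < K := DoubleWell.radius_pos hm.ne' (by norm_num)
  obtain ⟨C, hC, hturnTime⟩ := DoubleWell.exists_turnTime_le_mul_log (p := p) hm
  refine ⟨min (min (K / 4) (K ^ 2)) (exp (-1)), by positivity, 1 / m, by positivity, 2 * C,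
    by positivity, fun η hη hη₀ a b ha hb ha0 hb0 => ?_⟩
  simp only [lt_min_iff] at hη₀
  have hs : DoubleWell.IsSmallOrbit m p η a b := ⟨⟨ha, hb⟩, ha0, hb0, hη, by linarith⟩
  obtain ⟨τ, ⟨hτ, hτT⟩, hbτ, hpos⟩ := hs.exists_first_turn hp hm
  refine ⟨2 * τ, by positivity, ?_, ?_, hs.periodic hb0 hbτ⟩
  · rw [one_div_mul_eq_div, div_le_iff₀' hm]
    exact hs.log_inv_le_of_turn (by omega) hm hη₀.1.2.le hτ hbτ hpos
  · linarith [hturnTime η hη hη₀.2.le]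
end
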